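/- arXiv:math/0011174 — 7 statements merged into one kernel-verified Lean document; each statement's English description precedes it below -/
import Mathlib

section
/- For 1 ≤ i ≤ n and real z, Σ_{k=1}^n C(i-1, n-k) z (1+z)^{n-k} (az+b)^{k-1} = z (1+b+z(1+a))^{i-1} (az+b)^{n-i}, where a = (1+√5)/2 and b = (1-√5)/2. -/
theorem stmt_1 (n : ℕ) (hn : 0 < n) (i : ℕ) (hi1 : 1 ≤ i) (hin : i ≤ n)
    (a b : ℝ) (ha : a = (1 + Real.sqrt 5) / 2) (hb : b = (1 - Real.sqrt 5) / 2)
    (z : ℝ) :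
    ∑ k ∈ Finset.Icc 1 n,
      ((i - 1).choose (n - k) : ℝ) * z * (1 + z) ^ (n - k) * (a * z + b) ^ (k - 1) =
      z * (1 + b + z * (1 + a)) ^ (i - 1) * (a * z + b) ^ (n - i) := by
  have h1 : ∑ k ∈ Finset.Icc 1 n,
      ((i - 1).choose (n - k) : ℝ) * z * (1 + z) ^ (n - k) * (a * z + b) ^ (k - 1)
      = ∑ j ∈ Finset.range n,
      ((i - 1).choose j : ℝ) * z * (1 + z) ^ j * (a * z + b) ^ (n - 1 - j) := by
    apply Finset.sum_nbij' (fun k => n - k) (fun j => n - j)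
    · intro k hk
      simp only [Finset.mem_Icc] at hk
      simp only [Finset.mem_range]
      omega
    · intro j hj
      simp only [Finset.mem_range] at hj
      simp only [Finset.mem_Icc]
      omega
    · intro k hk
      simp only [Finset.mem_Icc] at hk
      omega
    · intro j hj
      simp only [Finset.mem_range] at hj
      omega
    · intro k hk
      simp only [Finset.mem_Icc] at hk
      rw [show n - 1 - (n - k) = k - 1 by omega]
  rw [h1]
  have h2 : ∑ j ∈ Finset.range n,
      ((i - 1).choose j : ℝ) * z * (1 + z) ^ j * (a * z + b) ^ (n - 1 - j)
      = ∑ j ∈ Finset.range i,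
      ((i - 1).choose j : ℝ) * z * (1 + z) ^ j * (a * z + b) ^ (n - 1 - j) := by
    refine (Finset.sum_subset (Finset.range_subset_range.2 hin) ?_).symm
    intro j hj hj'
    simp only [Finset.mem_range] at hj hj'
    have : (i - 1).choose j = 0 := Nat.choose_eq_zero_of_lt (by omega)
    simp [this]
  rw [h2]
  have hab : 1 + b + z * (1 + a) = (1 + z) + (a * z + b) := by ring
  rw [hab, add_pow]
  have hii : i - 1 + 1 = i := by omega
  rw [hii, Finset.mul_sum, Finset.sum_mul]
  apply Finset.sum_congr rfl
  intro j hj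
  simp only [Finset.mem_range] at hj
  have hp : (a * z + b) ^ (i - 1 - j) * (a * z + b) ^ (n - i) = (a * z + b) ^ (n - 1 - j) := by
    rw [← pow_add]
    congr 1
    omega
  rw [← hp]
  ring
end

section
/- For 1 ≤ i ≤ n, the polynomial identity z(1+b+z(1+a))^{i-1}(az+b)^{n-i} = (-1)^n a^{-n-1} U_i(-a² z) holds, where U_i(z) = z(1+z)^{n-i}(az+b)^{i-1}, a = (1+√5)/2, b = (1-√5)/2. -/
/-!
Both factors of `U_i` transform linearly under `z ↦ -a²z`: since `ab = -1`, `1 - a²z = -a(az + b)`,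
and since moreover `a + b = 1` (so `a² = a + 1`), `a(-a²z) + b = -a(1 + b + z(1 + a))`.
Hence `U_i(-a²z) = -a²(-a)^(n-1)` times the left-hand side, and this constant is exactly
`(-1)^n a^(n+1)`.
-/

section

variable {K : Type*} [Field K] {a b : K}

lemma one_add_neg_sq_mul_eq (hab : a * b = -1) (z : K) :
    1 + -a ^ 2 * z = -a * (a * z + b) := by
  linear_combination hab

lemma mul_neg_sq_mul_add_eq (hsum : a + b = 1) (hab : a * b = -1) (z : K) :
    a * (-a ^ 2 * z) + b = -a * (1 + b + z * (1 + a)) := by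
  linear_combination (1 + a * z) * hab + (1 - a ^ 2 * z) * hsum

lemma neg_one_pow_mul_zpow_mul_neg_pow {n : ℕ} (hn : 0 < n) (ha : a ≠ 0) :
    (-1) ^ n * a ^ (-(n : ℤ) - 1) * (-a ^ 2 * (-a) ^ (n - 1)) = 1 := by
  obtain ⟨m, rfl⟩ : ∃ m, n = m + 1 := ⟨n - 1, by omega⟩
  have hexp : -((m + 1 : ℕ) : ℤ) - 1 = -((m + 2 : ℕ) : ℤ) := by push_cast; ring
  have hsign : (-1 : K) ^ m * (-1) ^ m = 1 := by rw [← mul_pow]; norm_num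
  rw [hexp, zpow_neg, zpow_natCast, Nat.add_sub_cancel, neg_pow a]
  field_simp
  linear_combination a ^ (m + 2) * hsign

theorem mul_pow_mul_pow_eq_of_add_eq_one_of_mul_eq_neg_one {n i : ℕ} (hi1 : 1 ≤ i) (hin : i ≤ n)
    (hsum : a + b = 1) (hab : a * b = -1) (z : K) :
    z * (1 + b + z * (1 + a)) ^ (i - 1) * (a * z + b) ^ (n - i) =
      (-1) ^ n * a ^ (-(n : ℤ) - 1) *
        (-a ^ 2 * z * (1 + -a ^ 2 * z) ^ (n - i) * (a * (-a ^ 2 * z) + b) ^ (i - 1)) := by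
  have ha : a ≠ 0 := left_ne_zero_of_mul (by rw [hab]; norm_num)
  have hexp : n - 1 = (n - i) + (i - 1) := by omega
  rw [one_add_neg_sq_mul_eq hab, mul_neg_sq_mul_add_eq hsum hab, mul_pow, mul_pow]
  calc _ = ((-1) ^ n * a ^ (-(n : ℤ) - 1) * (-a ^ 2 * (-a) ^ (n - 1))) *
        (z * (1 + b + z * (1 + a)) ^ (i - 1) * (a * z + b) ^ (n - i)) := by
        rw [neg_one_pow_mul_zpow_mul_neg_pow (by omega) ha, one_mul]
    _ = _ := by rw [hexp, pow_add]; ring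

end

theorem stmt_3_general (n : ℕ) (i : ℕ) (hi1 : 1 ≤ i) (hin : i ≤ n)
    (a b : ℝ) (ha : a = (1 + Real.sqrt 5) / 2) (hb : b = (1 - Real.sqrt 5) / 2)
    (U : ℕ → ℝ → ℝ) (hU : ∀ i z, U i z = z * (1 + z) ^ (n - i) * (a * z + b) ^ (i - 1)) :
    ∀ z : ℝ, z * (1 + b + z * (1 + a)) ^ (i - 1) * (a * z + b) ^ (n - i) =
      (-1 : ℝ) ^ n * a ^ (-(n : ℤ) - 1) * U i (-a ^ 2 * z) := by
  obtain rfl : a = Real.goldenRatio := ha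
  obtain rfl : b = Real.goldenConj := hb
  intro z
  rw [hU]
  exact mul_pow_mul_pow_eq_of_add_eq_one_of_mul_eq_neg_one hi1 hin
    Real.goldenRatio_add_goldenConj Real.goldenRatio_mul_goldenConj z

theorem stmt_3 (n : ℕ) (hn : 0 < n) (i : ℕ) (hi1 : 1 ≤ i) (hin : i ≤ n)
    (a b : ℝ) (ha : a = (1 + Real.sqrt 5) / 2) (hb : b = (1 - Real.sqrt 5) / 2)
    (U : ℕ → ℝ → ℝ) (hU : ∀ i z, U i z = z * (1 + z) ^ (n - i) * (a * z + b) ^ (i - 1)) :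
    ∀ z : ℝ, z * (1 + b + z * (1 + a)) ^ (i - 1) * (a * z + b) ^ (n - i) =
      (-1 : ℝ) ^ n * a ^ (-(n : ℤ) - 1) * U i (-a ^ 2 * z) :=
  stmt_3_general n i hi1 hin a b ha hb U hU
end

section
/- Let n be a positive integer and R the n×n real matrix with entries R_{ij} = C(i-1, n-j). Let a = (1+√5)/2 and for 1 ≤ j ≤ n set λ_j = (-1)^{n+j} a^{2j-n-1}. Define u_{ij} = Σ_{k=1}^j (-1)^{i-k} C(i-1, k-1) C(n-i, j-k) a^{2k-i-1} and let u_j be the column vector (u_{1j}, …, u_{nj}). Then R u_j = λ_j u_j for each 1 ≤ j ≤ n. -/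
open Polynomial Finset

lemma coeff_lin_pow (α β : ℝ) (hα : α ≠ 0) (m p : ℕ) :
    ((C α * X + C β) ^ m).coeff p = (m.choose p : ℝ) * α ^ p * β ^ (m - p) := by
  have h : C α * X + C β = C α * (X + C (β / α)) := by
    rw [mul_add, ← C_mul, mul_div_cancel₀ _ hα]
  rw [h, mul_pow, ← C_pow, coeff_C_mul, coeff_X_add_C_pow]
  by_cases hpm : p ≤ m
  · rw [div_pow]
    have hm : α ^ m = α ^ p * α ^ (m - p) := by rw [← pow_add]; congr 1; omega
    field_simp [hm]
    rw [hm]; ring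
  · rw [Nat.choose_eq_zero_of_lt (by omega)]
    simp

lemma coeff_lin_pow_mul (α β γ δ : ℝ) (hα : α ≠ 0) (hγ : γ ≠ 0) (m₁ m₂ p : ℕ) :
    ((C α * X + C β) ^ m₁ * ((C γ * X + C δ) ^ m₂)).coeff p =
      ∑ q ∈ range (p + 1),
        ((m₁.choose q : ℝ) * α ^ q * β ^ (m₁ - q)) *
          ((m₂.choose (p - q) : ℝ) * γ ^ (p - q) * δ ^ (m₂ - (p - q))) := by
  rw [coeff_mul, Finset.Nat.sum_antidiagonal_eq_sum_range_succ_mk]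
  exact Finset.sum_congr rfl fun q _ => by rw [coeff_lin_pow _ _ hα, coeff_lin_pow _ _ hγ]

lemma neg_one_pow_congr' {p q : ℕ} (h : p % 2 = q % 2) : (-1:ℝ)^p = (-1:ℝ)^q := by
  rcases Nat.even_or_odd p with hp | hp
  · have h2 := Nat.even_iff.mp hp
    rw [hp.neg_one_pow, (Nat.even_iff.mpr (by omega) : Even q).neg_one_pow]
  · have h2 := Nat.odd_iff.mp hp
    rw [hp.neg_one_pow, (Nat.odd_iff.mpr (by omega) : Odd q).neg_one_pow]

-- Lemma A : coeff (j-1) of b^(m-1) c^(n-m) equals u m j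
lemma lemA (n j m : ℕ) (a : ℝ) (ha0 : a ≠ 0) (hm : 1 ≤ m) (hj : 1 ≤ j) :
    (((C a * X + C (-a⁻¹)) ^ (m-1)) * ((C 1 * X + C 1) ^ (n-m))).coeff (j-1) =
    ∑ k ∈ Finset.Icc 1 j, (-1 : ℝ) ^ ((m : ℤ) - k) * ((m - 1).choose (k - 1)) *
      ((n - m).choose (j - k)) * a ^ (2 * (k : ℤ) - m - 1) := by
  rw [coeff_lin_pow_mul _ _ _ _ ha0 one_ne_zero]
  rw [← Finset.Ico_add_one_right_eq_Icc, Finset.sum_Ico_eq_sum_range]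
  have hj' : j + 1 - 1 = j := by omega
  rw [hj']
  have hjr : j - 1 + 1 = j := by omega
  rw [hjr]
  refine Finset.sum_congr rfl fun q hq => ?_
  rw [Finset.mem_range] at hq
  have h1 : 1 + q - 1 = q := by omega
  have h2 : j - (1 + q) = j - 1 - q := by omega
  rw [h1, h2]
  by_cases hqm : q ≤ m - 1
  · have hsgn : (m : ℤ) - ((1 + q : ℕ) : ℤ) = ((m - 1 - q : ℕ) : ℤ) := by omega
    have hexp : 2 * ((1 + q : ℕ) : ℤ) - m - 1 = (q : ℤ) - ((m - 1 - q : ℕ) : ℤ) := by omega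
    rw [hsgn, hexp, zpow_natCast, zpow_sub₀ ha0, zpow_natCast, zpow_natCast, neg_pow, inv_pow]
    field_simp
    ring
  · rw [Nat.choose_eq_zero_of_lt (by omega)]
    simp

-- Lemma B : binomial sum identity
lemma lemB (n I : ℕ) (hI1 : 1 ≤ I) (hIn : I ≤ n) (b c : ℝ[X]) :
    ∑ m ∈ Finset.Icc 1 n, (((I-1).choose (n-m) : ℝ)) • (b^(m-1) * c^(n-m))
      = (c + b)^(I-1) * b^(n-I) := by
  have hre : ∑ m ∈ Finset.Icc 1 n, (((I-1).choose (n-m) : ℝ)) • (b^(m-1) * c^(n-m))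
      = ∑ s ∈ range n, (((I-1).choose s : ℝ)) • (b^(n-1-s) * c^s) := by
    refine Finset.sum_nbij' (fun m => n - m) (fun s => n - s) ?_ ?_ ?_ ?_ ?_
    · intro m hm
      rw [Finset.mem_Icc] at hm
      simp only [Finset.mem_range]
      omega
    · intro s hs
      rw [Finset.mem_range] at hs
      simp only [Finset.mem_Icc]
      omega
    · intro m hm
      rw [Finset.mem_Icc] at hm
      show n - (n - m) = m
      omega
    · intro s hs
      rw [Finset.mem_range] at hs
      show n - (n - s) = s
      omega
    · intro m hm
      rw [Finset.mem_Icc] at hm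
      show _ = ((I-1).choose (n - m) : ℝ) • (b^(n-1-(n-m)) * c^(n-m))
      have e1 : n - 1 - (n - m) = m - 1 := by omega
      rw [e1]
  rw [hre]
  have hsub : range I ⊆ range n := by
    intro x hx; rw [Finset.mem_range] at *; omega
  have expand : (c + b)^(I-1) * b^(n-I)
      = ∑ s ∈ range I, (((I-1).choose s : ℝ)) • (b^(n-1-s) * c^s) := by
    have hIr : I - 1 + 1 = I := by omega
    rw [add_pow, Finset.sum_mul, hIr]
    refine Finset.sum_congr rfl fun s hs => ?_
    rw [Finset.mem_range] at hs
    have e4 : n - 1 - s = (I - 1 - s) + (n - I) := by omega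
    rw [e4, pow_add, Polynomial.smul_eq_C_mul, map_natCast]
    ring
  rw [expand]
  exact (Finset.sum_subset hsub (by
    intro s _ hs
    rw [Finset.mem_range, not_lt] at hs
    rw [Nat.choose_eq_zero_of_lt (show I - 1 < s by omega)]
    simp)).symm

-- Lemma C : eigen-relation at the level of coefficients
lemma lemC (n I j : ℕ) (a : ℝ) (ha0 : a ≠ 0)
    (hI1 : 1 ≤ I) (hIn : I ≤ n) (hj1 : 1 ≤ j) (hjn : j ≤ n) :
    ((C (a^2) * X + C (a⁻¹^2))^(I-1) * (C a * X + C (-a⁻¹))^(n-I)).coeff (j-1)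
      = ((-1:ℝ)^(n+j) * a^(2*(j:ℤ)-n-1)) *
        (((C a * X + C (-a⁻¹))^(I-1) * (C 1 * X + C 1)^(n-I)).coeff (j-1)) := by
  rw [coeff_lin_pow_mul _ _ _ _ (pow_ne_zero 2 ha0) ha0,
      coeff_lin_pow_mul _ _ _ _ ha0 one_ne_zero, Finset.mul_sum]
  refine Finset.sum_congr rfl fun q hq => ?_
  rw [Finset.mem_range] at hq
  by_cases h1 : q ≤ I - 1
  swap
  · rw [Nat.choose_eq_zero_of_lt (show I - 1 < q by omega)]; simp
  by_cases h2 : j - 1 - q ≤ n - I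
  swap
  · rw [Nat.choose_eq_zero_of_lt (show n - I < j - 1 - q by omega)]; simp
  simp only [one_pow, mul_one]
  have main : (a^2)^q * (a⁻¹^2)^(I-1-q) * (a^(j-1-q) * (-a⁻¹)^(n-I-(j-1-q)))
      = (-1:ℝ)^(n+j) * a^(2*(j:ℤ)-n-1) * (a^q * (-a⁻¹)^(I-1-q)) := by
    have n1 : (-a⁻¹ : ℝ)^(n-I-(j-1-q)) = (-1:ℝ)^(n-I-(j-1-q)) * a⁻¹^(n-I-(j-1-q)) :=
      neg_pow _ _
    have n2 : (-a⁻¹ : ℝ)^(I-1-q) = (-1:ℝ)^(I-1-q) * a⁻¹^(I-1-q) := neg_pow _ _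
    rw [n1, n2]
    have sgn : (-1:ℝ)^(n-I-(j-1-q)) = (-1:ℝ)^(n+j) * (-1:ℝ)^(I-1-q) := by
      rw [← pow_add]
      apply neg_one_pow_congr'
      omega
    have mag : (a^2)^q * (a⁻¹^2)^(I-1-q) * (a^(j-1-q) * a⁻¹^(n-I-(j-1-q)))
        = a^(2*(j:ℤ)-n-1) * (a^q * a⁻¹^(I-1-q)) := by
      have c1 : (a^2)^q = a ^ ((2*q : ℕ) : ℤ) := by rw [← pow_mul, zpow_natCast]
      have c2 : (a⁻¹^2)^(I-1-q) = a ^ (-((2*(I-1-q) : ℕ) : ℤ)) := by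
        rw [← pow_mul, inv_pow, ← zpow_natCast a, ← zpow_neg]
      have c3 : a^(j-1-q) = a ^ (((j-1-q : ℕ)) : ℤ) := (zpow_natCast a _).symm
      have c4 : a⁻¹^(n-I-(j-1-q)) = a ^ (-((n-I-(j-1-q) : ℕ) : ℤ)) := by
        rw [inv_pow, ← zpow_natCast a, ← zpow_neg]
      have c5 : a^q = a ^ ((q : ℕ) : ℤ) := (zpow_natCast a _).symm
      have c6 : a⁻¹^(I-1-q) = a ^ (-((I-1-q : ℕ) : ℤ)) := by
        rw [inv_pow, ← zpow_natCast a, ← zpow_neg]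
      rw [c1, c2, c3, c4, c5, c6, ← zpow_add₀ ha0, ← zpow_add₀ ha0, ← zpow_add₀ ha0,
          ← zpow_add₀ ha0, ← zpow_add₀ ha0]
      congr 1
      omega
    calc (a^2)^q * (a⁻¹^2)^(I-1-q) * (a^(j-1-q) * ((-1:ℝ)^(n-I-(j-1-q)) * a⁻¹^(n-I-(j-1-q))))
        = ((-1:ℝ)^(n-I-(j-1-q))) * ((a^2)^q * (a⁻¹^2)^(I-1-q) * (a^(j-1-q) * a⁻¹^(n-I-(j-1-q)))) := by ring
      _ = ((-1:ℝ)^(n+j) * (-1:ℝ)^(I-1-q)) * (a^(2*(j:ℤ)-n-1) * (a^q * a⁻¹^(I-1-q))) := by rw [sgn, mag]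
      _ = (-1:ℝ)^(n+j) * a^(2*(j:ℤ)-n-1) * (a^q * ((-1:ℝ)^(I-1-q) * a⁻¹^(I-1-q))) := by ring
  linear_combination (((I-1).choose q : ℝ) * ((n-I).choose (j-1-q) : ℝ)) * main

theorem stmt_4 (n : ℕ) (hn : 0 < n)
    (a : ℝ) (ha : a = (1 + Real.sqrt 5) / 2)
    (R : Matrix (Fin n) (Fin n) ℝ)
    (hR : ∀ i j : Fin n, R i j = (((i : ℕ) + 1 - 1).choose (n - ((j : ℕ) + 1)) : ℝ))
    (lam : ℕ → ℝ) (hlam : ∀ j, lam j = (-1 : ℝ) ^ (n + j) * a ^ (2 * (j : ℤ) - n - 1))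
    (u : ℕ → ℕ → ℝ)
    (hu : ∀ i j, u i j = ∑ k ∈ Finset.Icc 1 j,
      (-1 : ℝ) ^ ((i : ℤ) - k) * ((i - 1).choose (k - 1)) * ((n - i).choose (j - k)) *
        a ^ (2 * (k : ℤ) - i - 1))
    (v : ℕ → Fin n → ℝ) (hv : ∀ j (i : Fin n), v j i = u ((i : ℕ) + 1) j) :
    ∀ j : ℕ, 1 ≤ j → j ≤ n → R.mulVec (v j) = fun i => lam j * v j i := by
  have h5 : Real.sqrt 5 ^ 2 = 5 := Real.sq_sqrt (by norm_num)
  have hapos : 0 < a := by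
    rw [ha]; nlinarith [Real.sqrt_nonneg 5]
  have ha0 : a ≠ 0 := ne_of_gt hapos
  have ha2 : a ^ 2 = a + 1 := by rw [ha]; nlinarith [h5]
  have hainv : a⁻¹ = a - 1 :=
    inv_eq_of_mul_eq_one_right (show a * (a - 1) = 1 by nlinarith [ha2])
  have hbc : (C 1 * X + C 1) + (C a * X + C (-a⁻¹))
      = C (a ^ 2) * X + C (a⁻¹ ^ 2) := by
    have e2 : a⁻¹ ^ 2 = 1 + -a⁻¹ := by rw [hainv]; nlinarith [ha2]
    rw [ha2, e2, C_add, C_add]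
    ring
  intro j hj1 hjn
  funext i
  have hIn : (i : ℕ) + 1 ≤ n := i.isLt
  have key : (R.mulVec (v j)) i
      = ((C (a^2) * X + C (a⁻¹^2)) ^ ((i:ℕ)+1-1)
          * (C a * X + C (-a⁻¹)) ^ (n - ((i:ℕ)+1))).coeff (j-1) := by
    calc (R.mulVec (v j)) i
        = ∑ m : Fin n, ((((i:ℕ)+1-1).choose (n - ((m:ℕ)+1)) : ℝ)) * u ((m:ℕ)+1) j := by
          simp only [Matrix.mulVec, dotProduct, hR, hv]
      _ = ∑ t ∈ range n, ((((i:ℕ)+1-1).choose (n - (t+1)) : ℝ)) * u (t+1) j :=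
          Fin.sum_univ_eq_sum_range
            (fun t => ((((i:ℕ)+1-1).choose (n - (t+1)) : ℝ)) * u (t+1) j) n
      _ = ∑ m ∈ Finset.Icc 1 n, ((((i:ℕ)+1-1).choose (n - m) : ℝ)) * u m j := by
          rw [← Finset.Ico_add_one_right_eq_Icc, Finset.sum_Ico_eq_sum_range]
          refine (Finset.sum_congr (by simp) fun t _ => by rw [add_comm 1 t]).symm
      _ = ∑ m ∈ Finset.Icc 1 n, ((((i:ℕ)+1-1).choose (n - m) : ℝ)) *
            (((C a * X + C (-a⁻¹)) ^ (m-1) * ((C 1 * X + C 1) ^ (n-m))).coeff (j-1)) := by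
          refine Finset.sum_congr rfl fun m hm => ?_
          rw [Finset.mem_Icc] at hm
          rw [lemA n j m a ha0 hm.1 hj1, hu]
      _ = (∑ m ∈ Finset.Icc 1 n, ((((i:ℕ)+1-1).choose (n - m) : ℝ)) •
            ((C a * X + C (-a⁻¹)) ^ (m-1) * ((C 1 * X + C 1) ^ (n-m)))).coeff (j-1) := by
          rw [Polynomial.finset_sum_coeff]
          exact Finset.sum_congr rfl fun m _ => by rw [Polynomial.coeff_smul, smul_eq_mul]
      _ = (((C 1 * X + C 1) + (C a * X + C (-a⁻¹))) ^ ((i:ℕ)+1-1)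
            * (C a * X + C (-a⁻¹)) ^ (n - ((i:ℕ)+1))).coeff (j-1) := by
          rw [lemB n ((i:ℕ)+1) (by omega) (by omega)]
      _ = _ := by rw [hbc]
  rw [key, lemC n ((i:ℕ)+1) j a ha0 (by omega) (by omega) hj1 hjn,
      lemA n j ((i:ℕ)+1) a ha0 (by omega) hj1, hlam, hv, hu]
end

section
/- Let n be a positive integer and R the n×n real matrix with R_{ij} = C(i-1, n-j). Then for each j with 1 ≤ j ≤ n, the number (-1)^{n+j} a^{2j-n-1} (with a = (1+√5)/2) is an eigenvalue of R. -/
/-!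
Put `H = (φX + 1)^(j-1) (ψX + 1)^(n-j)` and let `w` be its coefficient vector. Row `i` of `R`
is the reversed coefficient vector of `(X + 1)^i` (padded to length `n`), so `w R` is the
reversed coefficient vector of `H(X + 1)`. Since `c(X + 1) + 1 = c(X + c)` for both roots `c` of `c² = c + 1`, we get
`H(X + 1) = φ^(j-1) ψ^(n-j) X^(n-1) H(1/X)`, i.e. `w` is a left eigenvector of `R` for
`φ^(j-1) ψ^(n-j) = (-1)^(n+j) φ^(2j-n-1)`, and a left eigenvalue is also a right one.
-/

open Polynomial Matrix

namespace Polynomial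

variable {R : Type*} [Semiring R]

theorem reflect_C_mul_X_add_one (c : R) : reflect 1 (C c * X + 1) = X + C c := by
  rw [reflect_add, ← pow_one X, reflect_C_mul_X_pow, ← C_1, reflect_C]
  simp [add_comm]

theorem reflect_C_mul_X_add_one_pow (c : R) (m : ℕ) :
    reflect m ((C c * X + 1) ^ m) = (X + C c) ^ m := by
  induction m with
  | zero => simp
  | succ m ih =>
    rw [pow_succ, reflect_mul _ _ (by compute_degree) (by compute_degree), ih,
      reflect_C_mul_X_add_one, pow_succ]

theorem coeff_comp_X_add_one (p : R[X]) {N : ℕ} (hp : p.natDegree < N) (t : ℕ) :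
    (p.comp (X + 1)).coeff t = ∑ r ∈ Finset.range N, p.coeff r * r.choose t := by
  conv_lhs => rw [p.as_sum_range' N hp]
  rw [comp, eval₂_finsetSum, finsetSum_coeff]
  refine Finset.sum_congr rfl fun r _ => ?_
  rw [eval₂_monomial, coeff_C_mul, coeff_X_add_one_pow]

theorem C_mul_X_add_one_comp_X_add_one {c : R} (hc : c ^ 2 = c + 1) :
    (C c * X + 1).comp (X + 1) = C c * (X + C c) := by
  rw [add_comp, C_mul_comp, X_comp, one_comp, mul_add, mul_add, mul_one, ← C_mul, ← pow_two, hc,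
    C_add, C_1, add_assoc]

end Polynomial

theorem comp_X_add_one_of_sq_eq_add_one {R : Type*} [CommSemiring R] {a b : R}
    (ha : a ^ 2 = a + 1) (hb : b ^ 2 = b + 1) (m k : ℕ) :
    ((C a * X + 1) ^ m * (C b * X + 1) ^ k).comp (X + 1) =
      C (a ^ m * b ^ k) * reflect (m + k) ((C a * X + 1) ^ m * (C b * X + 1) ^ k) := by
  rw [reflect_mul _ _ (by compute_degree) (by compute_degree), reflect_C_mul_X_add_one_pow,
    reflect_C_mul_X_add_one_pow, mul_comp, pow_comp, pow_comp,
    C_mul_X_add_one_comp_X_add_one ha, C_mul_X_add_one_comp_X_add_one hb, mul_pow, mul_pow,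
    C_mul, C_pow, C_pow]
  ring

def revPascal (R : Type*) [Semiring R] (n : ℕ) : Matrix (Fin n) (Fin n) R :=
  Matrix.of fun i j => ((i : ℕ).choose (n - 1 - j) : R)

theorem coeff_vecMul_revPascal {R : Type*} [Semiring R] {n : ℕ} {p : R[X]} {μ : R}
    (hp : p.natDegree < n) (h : p.comp (X + 1) = C μ * reflect (n - 1) p) :
    (fun i : Fin n => p.coeff i) ᵥ* revPascal R n = μ • fun i : Fin n => p.coeff i := by
  ext t
  have hrev : revAt (n - 1) (n - 1 - t) = t := by rw [revAt_le (by omega)]; omega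
  calc ((fun i : Fin n => p.coeff i) ᵥ* revPascal R n) t
      = ∑ r ∈ Finset.range n, p.coeff r * (r.choose (n - 1 - t) : R) := by
        simp [vecMul, dotProduct, revPascal, Finset.sum_range]
    _ = μ * p.coeff t := by rw [← coeff_comp_X_add_one p hp, h, coeff_C_mul, coeff_reflect, hrev]

theorem Matrix.exists_mulVec_eq_smul_of_vecMul_eq_smul {ι A : Type*} [Fintype ι] [DecidableEq ι]
    [CommRing A] [IsDomain A] {M : Matrix ι ι A} {μ : A} {w : ι → A} (hw : w ≠ 0)
    (h : w ᵥ* M = μ • w) : ∃ v ≠ 0, M *ᵥ v = μ • v := by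
  have hdet : (M - μ • 1).det = 0 := by
    refine exists_vecMul_eq_zero_iff.1 ⟨w, hw, ?_⟩
    rw [vecMul_sub, h, vecMul_smul, vecMul_one, sub_self]
  obtain ⟨v, hv, hMv⟩ := exists_mulVec_eq_zero_iff.2 hdet
  refine ⟨v, hv, sub_eq_zero.1 ?_⟩
  rwa [sub_mulVec, smul_mulVec, one_mulVec] at hMv

open Real goldenRatio in
theorem goldenRatio_pow_mul_goldenConj_pow (m k : ℕ) :
    φ ^ m * ψ ^ k = (-1) ^ k * φ ^ ((m : ℤ) - k) := by
  rw [← neg_neg ψ, ← inv_goldenRatio, zpow_sub₀ goldenRatio_ne_zero, neg_pow, inv_pow]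
  simp only [zpow_natCast]
  ring

open Real goldenRatio in
theorem stmt_5_general (n : ℕ)
    (a : ℝ) (ha : a = (1 + Real.sqrt 5) / 2)
    (R : Matrix (Fin n) (Fin n) ℝ)
    (hR : ∀ i j : Fin n, R i j = (((i : ℕ) + 1 - 1).choose (n - ((j : ℕ) + 1)) : ℝ)) :
    ∀ j : ℕ, 1 ≤ j → j ≤ n →
      ∃ v : Fin n → ℝ, v ≠ 0 ∧
        R.mulVec v = fun i => ((-1 : ℝ) ^ (n + j) * a ^ (2 * (j : ℤ) - n - 1)) * v i := by
  rintro j hj hjn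
  obtain ⟨m, rfl⟩ : ∃ m, j = m + 1 := ⟨j - 1, by omega⟩
  obtain ⟨k, rfl⟩ : ∃ k, n = m + k + 1 := ⟨n - (m + 1), by omega⟩
  have hRev : R = revPascal ℝ (m + k + 1) := by
    ext i t
    rw [hR, revPascal, of_apply, Nat.add_sub_cancel, Nat.sub_add_eq, Nat.sub_right_comm]
  set H : ℝ[X] := (C φ * X + 1) ^ m * (C ψ * X + 1) ^ k
  set w : Fin (m + k + 1) → ℝ := fun i => H.coeff i
  have hw : w ᵥ* R = (φ ^ m * ψ ^ k) • w :=
    hRev ▸ coeff_vecMul_revPascal (by unfold H; compute_degree!)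
      (comp_X_add_one_of_sq_eq_add_one goldenRatio_sq goldenConj_sq m k)
  have hw0 : w ≠ 0 := fun h => by simpa [w, H, coeff_zero_eq_eval_zero] using congr_fun h 0
  obtain ⟨v, hv, hRv⟩ := Matrix.exists_mulVec_eq_smul_of_vecMul_eq_smul hw0 hw
  have hsign : (-1 : ℝ) ^ (m + k + 1 + (m + 1)) = (-1) ^ k := by
    rw [show m + k + 1 + (m + 1) = k + 2 * (m + 1) by ring, pow_add, pow_mul, neg_one_sq, one_pow,
      mul_one]
  have hexp : 2 * ((m + 1 : ℕ) : ℤ) - ((m + k + 1 : ℕ) : ℤ) - 1 = (m : ℤ) - k := by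
    push_cast; ring
  refine ⟨v, hv, hRv.trans ?_⟩
  rw [goldenRatio_pow_mul_goldenConj_pow, hsign, hexp, ha]
  rfl

theorem stmt_5 (n : ℕ) (hn : 0 < n)
    (a : ℝ) (ha : a = (1 + Real.sqrt 5) / 2)
    (R : Matrix (Fin n) (Fin n) ℝ)
    (hR : ∀ i j : Fin n, R i j = (((i : ℕ) + 1 - 1).choose (n - ((j : ℕ) + 1)) : ℝ)) :
    ∀ j : ℕ, 1 ≤ j → j ≤ n →
      ∃ v : Fin n → ℝ, v ≠ 0 ∧
        R.mulVec v = fun i => ((-1 : ℝ) ^ (n + j) * a ^ (2 * (j : ℤ) - n - 1)) * v i :=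
  stmt_5_general n a ha R hR
end

section
/- Let n be a positive integer and R the n×n real matrix with R_{ij} = C(i-1, n-j). Then the determinant of R equals (-1)^{⌊n/2⌋} (equivalently, up to sign, the product of the eigenvalues (-1)^{n+j} a^{2j-n-1}, j = 1,…,n, equals ±1, since Σ_{j=1}^n (2j-n-1) = 0). -/
/-!
Read with its columns reversed, `R` is the lower unitriangular Pascal matrix `(C(i, j))`, so its
determinant is the sign of the reversal of `Fin n`. Composing the reversal of `Fin (n + 1)` with
the `n`-fold cyclic rotation gives the reversal of `Fin n` extended by a fixed point, so that sign
picks up `(-1) ^ n` at each step, which adds up to `(-1) ^ (n / 2)`.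
-/

open Equiv Equiv.Perm

theorem Fin.revPerm_mul_finRotate (n : ℕ) :
    (Fin.revPerm : Perm (Fin (n + 1))) * finRotate (n + 1) =
      finSumFinEquiv.permCongr (Equiv.sumCongr (Fin.revPerm : Perm (Fin n)) 1) := by
  ext i
  refine Fin.lastCases ?_ (fun j => ?_) i <;> simp [permCongr_apply]

theorem Fin.sign_revPerm_succ (n : ℕ) :
    sign (Fin.revPerm : Perm (Fin (n + 1))) = sign (Fin.revPerm : Perm (Fin n)) * (-1) ^ n := by
  have h := congrArg sign (Fin.revPerm_mul_finRotate n)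
  rw [Perm.sign_mul, sign_finRotate, sign_permCongr, sign_sumCongr, Perm.sign_one, mul_one,
    Nat.add_sub_cancel] at h
  rw [← h, mul_assoc, ← pow_add, ← two_mul, pow_mul, Int.units_sq, one_pow, mul_one]

theorem Fin.sign_revPerm (n : ℕ) : sign (Fin.revPerm : Perm (Fin n)) = (-1) ^ (n / 2) := by
  induction n with
  | zero => rfl
  | succ n ih =>
    rw [Fin.sign_revPerm_succ, ih, ← pow_add, Int.units_pow_eq_pow_mod_two,
      Int.units_pow_eq_pow_mod_two _ ((n + 1) / 2)]
    rcases Nat.even_or_odd' n with ⟨k, rfl | rfl⟩ <;> congr 1 <;> omega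

def Matrix.pascal (R : Type*) [NatCast R] (n : ℕ) : Matrix (Fin n) (Fin n) R :=
  Matrix.of fun i j => ((i : ℕ).choose j : R)

theorem Matrix.det_pascal (R : Type*) [CommRing R] (n : ℕ) : (Matrix.pascal R n).det = 1 := by
  have hlower : (Matrix.pascal R n).IsLowerTriangular := fun i j hij => by
    simp [Matrix.pascal, Nat.choose_eq_zero_of_lt (show (i : ℕ) < j from hij)]
  rw [Matrix.det_of_isLowerTriangular _ hlower]
  simp [Matrix.pascal]

theorem stmt_7_general (n : ℕ)
    (R : Matrix (Fin n) (Fin n) ℝ)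
    (hR : ∀ i j : Fin n, R i j = (((i : ℕ) + 1 - 1).choose (n - ((j : ℕ) + 1)) : ℝ)) :
    R.det = (-1 : ℝ) ^ (n / 2) := by
  have hR_rev : R = (Matrix.pascal ℝ n).submatrix id Fin.revPerm := by
    ext i j
    simp [hR, Matrix.pascal, Nat.sub_add_eq]
  rw [hR_rev, Matrix.det_permute', Matrix.det_pascal, mul_one, Fin.sign_revPerm]
  push_cast
  rfl

theorem stmt_7 (n : ℕ) (hn : 0 < n)
    (R : Matrix (Fin n) (Fin n) ℝ)
    (hR : ∀ i j : Fin n, R i j = (((i : ℕ) + 1 - 1).choose (n - ((j : ℕ) + 1)) : ℝ)) :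
    R.det = (-1 : ℝ) ^ (n / 2) :=
  stmt_7_general n R hR
end

section
/- For 1 ≤ i ≤ n, the coefficient of z^j in Σ_{k=1}^n C(i-1, n-k) U_k(z) equals the coefficient of z^j in (-1)^n a^{-n-1} U_i(-a² z), for all 1 ≤ j ≤ n, where U_k(z) = z(1+z)^{n-k}(az+b)^{k-1}, a = (1+√5)/2, b = (1-√5)/2. -/
open Polynomial in
theorem stmt_10 (n : ℕ) (hn : 0 < n) (i : ℕ) (hi1 : 1 ≤ i) (hin : i ≤ n)
    (a b : ℝ) (ha : a = (1 + Real.sqrt 5) / 2) (hb : b = (1 - Real.sqrt 5) / 2)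
    (U : ℕ → Polynomial ℝ)
    (hU : ∀ k, U k = X * (1 + X) ^ (n - k) * (C a * X + C b) ^ (k - 1)) :
    ∀ j : ℕ, 1 ≤ j → j ≤ n →
      (∑ k ∈ Finset.Icc 1 n, C (((i - 1).choose (n - k) : ℕ) : ℝ) * U k).coeff j =
      (C ((-1 : ℝ) ^ n * a ^ (-(n : ℤ) - 1)) * (U i).comp (C (-a ^ 2) * X)).coeff j := by
  have hs : Real.sqrt 5 ^ 2 = 5 := Real.sq_sqrt (by norm_num)
  have ha0 : a ≠ 0 := by
    rw [ha]; positivity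
  have hab : a * b = -1 := by rw [ha, hb]; nlinarith
  have hab1 : a + b = 1 := by rw [ha, hb]; ring
  have ha2 : a ^ 2 = a + 1 := by rw [ha]; nlinarith
  have Hab : (C a : ℝ[X]) * C b = -1 := by rw [← C_mul, hab]; simp
  have Hab1 : (C a : ℝ[X]) + C b = 1 := by rw [← C_add, hab1]; simp
  have Ha2 : (C a : ℝ[X]) ^ 2 = C a + 1 := by
    rw [← map_pow, ha2, map_add, map_one]
  set mid : ℝ[X] := X * (C a * X + C b) ^ (n - i) * (C (a + 1) * X + C (b + 1)) ^ (i - 1)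
    with hmid
  -- LHS = mid
  have hL : (∑ k ∈ Finset.Icc 1 n, C (((i - 1).choose (n - k) : ℕ) : ℝ) * U k) = mid := by
    have step1 : (∑ k ∈ Finset.Icc 1 n, C (((i - 1).choose (n - k) : ℕ) : ℝ) * U k)
        = ∑ m ∈ Finset.range n,
            C (((i - 1).choose m : ℕ) : ℝ) * (X * (1 + X) ^ m * (C a * X + C b) ^ (n - 1 - m)) := by
      refine Finset.sum_nbij' (fun k => n - k) (fun m => n - m) ?_ ?_ ?_ ?_ ?_
      · intro k hk; simp only [Finset.mem_Icc] at hk; simp only [Finset.mem_range]; omega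
      · intro m hm; simp only [Finset.mem_range] at hm; simp only [Finset.mem_Icc]; omega
      · intro k hk; simp only [Finset.mem_Icc] at hk; show n - (n - k) = k; omega
      · intro m hm; simp only [Finset.mem_range] at hm; show n - (n - m) = m; omega
      · intro k hk; simp only [Finset.mem_Icc] at hk
        show C (((i - 1).choose (n - k) : ℕ) : ℝ) * U k
          = C (((i - 1).choose (n - k) : ℕ) : ℝ) *
              (X * (1 + X) ^ (n - k) * (C a * X + C b) ^ (n - 1 - (n - k)))
        rw [hU k, show n - 1 - (n - k) = k - 1 by omega]
    rw [step1]
    have step2 : ∑ m ∈ Finset.range n,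
            C (((i - 1).choose m : ℕ) : ℝ) * (X * (1 + X) ^ m * (C a * X + C b) ^ (n - 1 - m))
        = ∑ m ∈ Finset.range i,
            C (((i - 1).choose m : ℕ) : ℝ) * (X * (1 + X) ^ m * (C a * X + C b) ^ (n - 1 - m)) := by
      symm
      refine Finset.sum_subset (Finset.range_subset_range.2 hin) ?_
      intro m _ hm
      simp only [Finset.mem_range, not_lt] at hm
      rw [Nat.choose_eq_zero_of_lt (by omega)]
      simp
    rw [step2]
    have step3 : ∀ m ∈ Finset.range i,
        C (((i - 1).choose m : ℕ) : ℝ) * (X * (1 + X) ^ m * (C a * X + C b) ^ (n - 1 - m))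
        = (X * (C a * X + C b) ^ (n - i)) *
            ((1 + X) ^ m * (C a * X + C b) ^ (i - 1 - m) * ((i-1).choose m : ℝ[X])) := by
      intro m hm
      simp only [Finset.mem_range] at hm
      rw [show n - 1 - m = (i - 1 - m) + (n - i) by omega, pow_add]
      simp only [map_natCast]
      ring
    rw [Finset.sum_congr rfl step3, ← Finset.mul_sum,
      show Finset.range i = Finset.range ((i-1)+1) by congr 1; omega,
      ← add_pow]
    have h5 : (1 + X) + (C a * X + C b) = C (a + 1) * X + C (b + 1) := by
      simp only [C_add, C_1]; ring
    rw [h5, hmid]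
  -- RHS = mid
  have hR : C ((-1 : ℝ) ^ n * a ^ (-(n : ℤ) - 1)) * (U i).comp (C (-a ^ 2) * X) = mid := by
    rw [hU i]
    simp only [mul_comp, X_comp, pow_comp, add_comp, one_comp, C_comp]
    have e1 : (1 : ℝ[X]) + C (-a ^ 2) * X = C (-a) * (C a * X + C b) := by
      simp only [map_neg, map_pow]
      linear_combination Hab
    have e2 : C a * (C (-a ^ 2) * X) + C b = C (-a) * (C (a + 1) * X + C (b + 1)) := by
      simp only [map_neg, map_pow, map_add, map_one]
      linear_combination (-(C a : ℝ[X]) * X) * Ha2 + Hab + Hab1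
    rw [e1, e2, mul_pow, mul_pow]
    have hc : (-1 : ℝ) ^ n * a ^ (-(n : ℤ) - 1) * (-a ^ 2) * (-a) ^ (n - 1) = 1 := by
      obtain ⟨m, rfl⟩ : ∃ m, n = m + 1 := ⟨n - 1, by omega⟩
      rw [show (-((m+1 : ℕ) : ℤ) - 1) = -(((m + 2 : ℕ)) : ℤ) by push_cast; ring,
        zpow_neg, zpow_natCast]
      simp only [Nat.add_sub_cancel]
      have hone : (-1 : ℝ) ^ (m + 1) * (-1 : ℝ) ^ m = -1 := by
        rw [← pow_add]
        exact Odd.neg_one_pow ⟨m, by ring⟩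
      have hapow : a ^ (m + 2) ≠ 0 := pow_ne_zero _ ha0
      have key : (-1 : ℝ) ^ (m + 1) * (-a ^ 2) * (-a) ^ m = a ^ (m + 2) := by
        rw [neg_pow]
        linear_combination (-(a^2) * a^m) * hone
      calc (-1 : ℝ) ^ (m + 1) * (a ^ (m + 2) : ℝ)⁻¹ * (-a ^ 2) * (-a) ^ m
          = (a ^ (m + 2) : ℝ)⁻¹ * ((-1 : ℝ) ^ (m + 1) * (-a ^ 2) * (-a) ^ m) := by ring
        _ = 1 := by rw [key]; exact inv_mul_cancel₀ hapow
    calc C ((-1 : ℝ) ^ n * a ^ (-(n : ℤ) - 1)) *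
          (C (-a ^ 2) * X * ((C (-a)) ^ (n - i) * (C a * X + C b) ^ (n - i)) *
            ((C (-a)) ^ (i - 1) * (C (a + 1) * X + C (b + 1)) ^ (i - 1)))
        = (C ((-1 : ℝ) ^ n * a ^ (-(n : ℤ) - 1)) * C (-a ^ 2) *
            ((C (-a)) ^ (n - i) * (C (-a)) ^ (i - 1))) * mid := by rw [hmid]; ring
      _ = mid := by
          rw [← pow_add, show n - i + (i - 1) = n - 1 by omega, ← C_pow, ← C_mul, ← C_mul, hc,
            C_1, one_mul]
  intro j _ _
  rw [hL, hR]
end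

section
/- For 1 ≤ i, j ≤ n, the j-th coefficient u_{ij} of U_i(z) = z(1+z)^{n-i}(az+b)^{i-1}, namely u_{ij} = Σ_{k=1}^j (-1)^{i-k} C(i-1,k-1) C(n-i,j-k) a^{2k-i-1} with a = (1+√5)/2, satisfies Σ_{k=1}^n C(i-1,n-k) u_{kj} = (-1)^{n+j} a^{2j-n-1} u_{ij}. -/
open Polynomial Finset

private lemma coeff_linear_pow (γ δ : ℝ) (q s : ℕ) :
    ((C γ * X + C δ) ^ q).coeff s = γ ^ s * δ ^ (q - s) * (q.choose s : ℝ) := by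
  rw [add_pow, finset_sum_coeff]
  have h : ∀ t ∈ Finset.range (q+1),
      ((C γ * X) ^ t * C δ ^ (q - t) * ((q.choose t : ℕ) : Polynomial ℝ)).coeff s
        = if s = t then γ ^ s * δ ^ (q - s) * (q.choose s : ℝ) else 0 := by
    intro t _
    have e : (C γ * X) ^ t * C δ ^ (q - t) * ((q.choose t : ℕ) : Polynomial ℝ)
        = C (γ ^ t * δ ^ (q - t) * (q.choose t : ℝ)) * X ^ t := by
      rw [mul_pow, ← C_pow, ← C_pow, ← C_eq_natCast, C_mul, C_mul]
      ring
    rw [e, coeff_C_mul, coeff_X_pow, mul_ite, mul_one, mul_zero]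
    split_ifs with hst
    · subst hst; rfl
    · rfl
  rw [Finset.sum_congr rfl h, Finset.sum_ite_eq (Finset.range (q+1)) s]
  split_ifs with hs
  · rfl
  · have hlt : q < s := by
      by_contra hc
      exact hs (Finset.mem_range.mpr (by omega))
    rw [Nat.choose_eq_zero_of_lt hlt]
    simp

private lemma coeff_mul_linear_pows (α β γ δ : ℝ) (p q w : ℕ) :
    ((C α * X + C β) ^ p * (C γ * X + C δ) ^ q).coeff w
      = ∑ t ∈ range (w+1),
          (α ^ t * β ^ (p - t) * (p.choose t : ℝ)) *
          (γ ^ (w - t) * δ ^ (q - (w - t)) * (q.choose (w - t) : ℝ)) := by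
  rw [coeff_mul, Finset.Nat.sum_antidiagonal_eq_sum_range_succ_mk]
  exact Finset.sum_congr rfl fun t _ => by rw [coeff_linear_pow, coeff_linear_pow]

private lemma stepA (a b : ℝ) (n i : ℕ) (h1 : 1 ≤ i) (h2 : i ≤ n) :
    ∑ m ∈ Icc 1 n, C (((i-1).choose (n-m) : ℕ) : ℝ) *
        ((C a * X + C b) ^ (m-1) * (C 1 * X + C 1) ^ (n-m))
      = (C (1+a) * X + C (1+b)) ^ (i-1) * (C a * X + C b) ^ (n-i) := by
  rw [← Finset.Ico_add_one_right_eq_Icc, Finset.sum_Ico_eq_sum_range]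
  simp only [Nat.add_sub_cancel]
  rw [← Finset.sum_range_reflect]
  have hre : ∀ t ∈ range n,
      C (((i-1).choose (n-(1+(n-1-t))) : ℕ) : ℝ) *
        ((C a * X + C b) ^ ((1+(n-1-t))-1) * (C 1 * X + C 1) ^ (n-(1+(n-1-t))))
      = C (((i-1).choose t : ℕ) : ℝ) *
        ((C a * X + C b) ^ (n-1-t) * (C 1 * X + C 1) ^ t) := by
    intro t ht
    have ht' : t < n := Finset.mem_range.mp ht
    rw [show n - (1 + (n-1-t)) = t by omega, show 1 + (n-1-t) - 1 = n-1-t by omega]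
  rw [Finset.sum_congr rfl hre]
  rw [← Finset.sum_subset (Finset.range_subset_range.mpr h2) (fun t _ hti => by
    rw [Nat.choose_eq_zero_of_lt (by simp at hti ⊢; omega : i - 1 < t)]
    simp)]
  have hadd : (C (1+a) * X + C (1+b) : Polynomial ℝ) = (C 1 * X + C 1) + (C a * X + C b) := by
    rw [C_add, C_add]; ring
  rw [hadd, add_pow, show i - 1 + 1 = i by omega, Finset.sum_mul]
  refine Finset.sum_congr rfl fun t ht => ?_
  have ht' : t < i := Finset.mem_range.mp ht
  rw [show n - 1 - t = (i-1-t) + (n-i) by omega, pow_add, C_eq_natCast]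
  ring

private lemma uRepr (a b : ℝ) (ha0 : a ≠ 0) (hb : b = -a⁻¹)
    (n i j : ℕ) (hi : 1 ≤ i) (hj : 1 ≤ j) :
    (∑ k ∈ Icc 1 j, (-1:ℝ)^((i:ℤ)-(k:ℕ)) * ((i-1).choose (k-1) : ℝ) *
        ((n-i).choose (j-k) : ℝ) * a^(2*(k:ℤ)-i-1))
    = ((C a * X + C b)^(i-1) * (C 1 * X + C 1)^(n-i)).coeff (j-1) := by
  rw [coeff_mul_linear_pows, show j - 1 + 1 = j by omega,
    ← Finset.Ico_add_one_right_eq_Icc, Finset.sum_Ico_eq_sum_range]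
  simp only [Nat.succ_sub_one, one_pow, one_mul, mul_one]
  refine Finset.sum_congr rfl fun t ht => ?_
  have ht' : t < j := Finset.mem_range.mp ht
  rw [show (1:ℕ) + t - 1 = t by omega, show j - (1+t) = j - 1 - t by omega]
  by_cases hti : t < i
  · have hm : i - 1 - t + t + 1 = i := by omega
    set m := i - 1 - t with hmdef
    rw [show (i:ℤ) - ((1+t : ℕ) : ℤ) = (m:ℤ) by omega,
      show 2*((1+t : ℕ) : ℤ) - i - 1 = (t:ℤ) - (m:ℤ) by omega,
      zpow_natCast, zpow_sub₀ ha0, zpow_natCast, zpow_natCast, hb]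
    rw [show ((-a⁻¹ : ℝ))^m = (-1)^m * (a^m)⁻¹ by rw [neg_pow, inv_pow], div_eq_mul_inv]
    ring
  · rw [Nat.choose_eq_zero_of_lt (show i - 1 < t by omega)]
    simp



theorem stmt_12 (n : ℕ) (hn : 0 < n)
    (a : ℝ) (ha : a = (1 + Real.sqrt 5) / 2)
    (u : ℕ → ℕ → ℝ)
    (hu : ∀ i j, u i j = ∑ k ∈ Finset.Icc 1 j,
      (-1 : ℝ) ^ ((i : ℤ) - k) * ((i - 1).choose (k - 1)) * ((n - i).choose (j - k)) *
        a ^ (2 * (k : ℤ) - i - 1)) :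
    ∀ i j : ℕ, 1 ≤ i → i ≤ n → 1 ≤ j → j ≤ n →
      ∑ k ∈ Finset.Icc 1 n, ((i - 1).choose (n - k) : ℝ) * u k j =
        (-1 : ℝ) ^ (n + j) * a ^ (2 * (j : ℤ) - n - 1) * u i j := by
  intro i j hi1 hin hj1 hjn
  have hs5 : Real.sqrt 5 ^ 2 = 5 := Real.sq_sqrt (by norm_num)
  have ha0 : a ≠ 0 := by
    have h0 : (0:ℝ) < (1 + Real.sqrt 5)/2 := by positivity
    rw [ha]; exact ne_of_gt h0
  have haa : a * a = a + 1 := by rw [ha]; nlinarith [hs5]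
  have hb : (1 - a : ℝ) = -a⁻¹ := by
    field_simp
    nlinarith [haa]
  have h1b : (1:ℝ) + (1 - a) = a⁻¹ * a⁻¹ := by
    field_simp
    nlinarith [haa]
  have h1a : (1:ℝ) + a = a * a := by linarith
  have hL : ∑ k ∈ Finset.Icc 1 n, ((i - 1).choose (n - k) : ℝ) * u k j
      = ((C (1+a) * X + C (1+(1-a)))^(i-1) * (C a * X + C (1-a))^(n-i)).coeff (j-1) := by
    rw [← stepA a (1-a) n i hi1 hin, finset_sum_coeff]
    refine Finset.sum_congr rfl fun k hk => ?_
    have hk1 : 1 ≤ k := (Finset.mem_Icc.mp hk).1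
    rw [coeff_C_mul, hu k j, uRepr a (1-a) ha0 hb n k j hk1 hj1]
  rw [hL, coeff_mul_linear_pows, show j - 1 + 1 = j by omega]
  rw [hu i j, ← Finset.Ico_add_one_right_eq_Icc, Finset.sum_Ico_eq_sum_range]
  simp only [Nat.add_sub_cancel]
  rw [Finset.mul_sum]
  refine Finset.sum_congr rfl fun t ht => ?_
  have ht' : t < j := Finset.mem_range.mp ht
  rw [show (1:ℕ) + t - 1 = t by omega, show j - (1+t) = j - 1 - t by omega]
  by_cases hti : t < i
  · by_cases hjt : j - 1 - t ≤ n - i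
    · set s := j - 1 - t with hsdef
      set m := i - 1 - t with hmdef
      set r := (n-i) - s with hrdef
      have hmi : m + t + 1 = i := by omega
      have hsr : s + r = n - i := by omega
      have hnn : n = m + j + r := by omega
      rw [show (i:ℤ) - ((1+t : ℕ) : ℤ) = (m:ℤ) by omega,
        show 2*((1+t : ℕ) : ℤ) - i - 1 = (t:ℤ) - (m:ℤ) by omega,
        show 2*(j:ℤ) - (n:ℤ) - 1 = ((t+s : ℕ) : ℤ) - ((m+r : ℕ) : ℤ) by push_cast; omega]
      simp only [zpow_sub₀ ha0, zpow_natCast]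
      rw [show n + j = m + r + 2*j by omega, pow_add, pow_mul, neg_one_sq, one_pow, mul_one]
      rw [h1b, h1a, hb]
      rw [show ((-a⁻¹ : ℝ))^r = (-1)^r * (a^r)⁻¹ by rw [neg_pow, inv_pow]]
      rw [show ((-1:ℝ))^(m+r) = (-1)^m * (-1)^r from pow_add (-1) m r]
      rcases Nat.even_or_odd m with hpar | hpar
      · rw [hpar.neg_one_pow]
        field_simp
        have hx : a ^ (m*2) * a⁻¹ ^ (m*2) = 1 := by rw [← mul_pow, mul_inv_cancel₀ ha0, one_pow]
        linear_combination (a ^ (t * 2) * a ^ s * a ^ r * ((i - 1).choose t : ℝ) * ((n - i).choose s : ℝ)) * hx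
      · rw [hpar.neg_one_pow]
        field_simp
        have hx : a ^ (m*2) * a⁻¹ ^ (m*2) = 1 := by rw [← mul_pow, mul_inv_cancel₀ ha0, one_pow]
        linear_combination (a ^ (t * 2) * a ^ s * a ^ r * ((i - 1).choose t : ℝ) * ((n - i).choose s : ℝ)) * hx
    · rw [Nat.choose_eq_zero_of_lt (show n - i < j - 1 - t by omega)]
      simp
  · rw [Nat.choose_eq_zero_of_lt (show i - 1 < t by omega)]
    simp
end
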